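/- For every integer N ≥ 3, the constant c_N = N (∏_{j=1}^{N−1} (2j)^{2j}/(2j+1)^{2j+1})^{1/(2N)} satisfies c_N > √(N/2). -/

import Mathlib

/-! Convexity of `x ↦ x log x` at the midpoint `2n + 1` of `2n` and `2n + 2` gives
`(2n)^(2n) / (2n+1)^(2n+1) ≥ (2n)^n / (2n+2)^(n+1)`. The right-hand sides telescope, so the
product in `c_N` is at least `2 / (2N)^N > (2N)^(-N)`, and taking the `2N`-th root gives
`c_N > N / √(2N) = √(N/2)`. -/

lemma odd_pow_self_le (n : ℕ) (hn : 0 < n) :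
    (2 * n + 1 : ℝ) ^ (2 * n + 1) ≤ (2 * n : ℝ) ^ n * (2 * (n + 1) : ℝ) ^ (n + 1) := by
  have hx : (2 * n : ℝ) ∈ Set.Ici 0 := Set.mem_Ici.2 (by positivity)
  have hy : (2 * (n + 1) : ℝ) ∈ Set.Ici 0 := Set.mem_Ici.2 (by positivity)
  have hconv := Real.convexOn_mul_log.2 hx hy (by norm_num : (0 : ℝ) ≤ 1 / 2)
    (by norm_num : (0 : ℝ) ≤ 1 / 2) (by norm_num)
  simp only [smul_eq_mul] at hconv
  rw [show (1 / 2 : ℝ) * (2 * n) + 1 / 2 * (2 * (n + 1)) = 2 * n + 1 by ring] at hconv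
  rw [← Real.log_le_log_iff (by positivity) (by positivity), Real.log_mul (by positivity)
    (by positivity), Real.log_pow, Real.log_pow, Real.log_pow]
  push_cast
  linarith

lemma pow_div_pow_succ_le (n : ℕ) (hn : 0 < n) :
    (2 * n : ℝ) ^ n / (2 * (n + 1) : ℝ) ^ (n + 1) ≤
      (2 * n : ℝ) ^ (2 * n) / (2 * n + 1 : ℝ) ^ (2 * n + 1) := by
  rw [div_le_div_iff₀ (by positivity) (by positivity)]
  calc (2 * n : ℝ) ^ n * (2 * n + 1 : ℝ) ^ (2 * n + 1)
      ≤ (2 * n : ℝ) ^ n * ((2 * n : ℝ) ^ n * (2 * (n + 1) : ℝ) ^ (n + 1)) := by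
        gcongr; exact odd_pow_self_le n hn
    _ = (2 * n : ℝ) ^ (2 * n) * (2 * (n + 1) : ℝ) ^ (n + 1) := by ring

lemma two_div_pow_le_prod (N : ℕ) (hN : 0 < N) :
    2 / (2 * N : ℝ) ^ N ≤ ∏ j ∈ Finset.Icc 1 (N - 1),
      (2 * j : ℝ) ^ (2 * j) / (2 * j + 1 : ℝ) ^ (2 * j + 1) := by
  obtain ⟨M, rfl⟩ := Nat.exists_eq_add_of_lt hN
  clear hN
  simp only [zero_add, Nat.add_sub_cancel]
  induction M with
  | zero => norm_num
  | succ M ih =>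
    rw [Finset.prod_Icc_succ_top (by omega)]
    have hterm := pow_div_pow_succ_le (M + 1) (by omega)
    push_cast at ih hterm ⊢
    calc 2 / (2 * (M + 1 + 1) : ℝ) ^ (M + 1 + 1)
        = 2 / (2 * (M + 1) : ℝ) ^ (M + 1) *
          ((2 * (M + 1) : ℝ) ^ (M + 1) / (2 * (M + 1 + 1) : ℝ) ^ (M + 1 + 1)) := by
          field_simp
      _ ≤ _ := by gcongr

lemma pow_rpow_one_div_two_mul_eq_sqrt {x : ℝ} (hx : 0 ≤ x) {n : ℕ} (hn : n ≠ 0) :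
    (x ^ n) ^ (1 / (2 * (n : ℝ))) = √x := by
  rw [← Real.rpow_natCast, ← Real.rpow_mul hx, Real.sqrt_eq_rpow]
  congr 1
  field_simp

lemma sqrt_div_two_eq_mul_inv_sqrt (x : ℝ) : √(x / 2) = x * (√(2 * x))⁻¹ := by
  rcases le_or_gt x 0 with hx | hx
  · simp [Real.sqrt_eq_zero'.2 (by linarith : x / 2 ≤ 0), Real.sqrt_eq_zero'.2 hx]
  rw [← div_eq_mul_inv, eq_div_iff (by positivity), ← Real.sqrt_mul (by positivity),
    show x / 2 * (2 * x) = x ^ 2 by ring, Real.sqrt_sq hx.le]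

/-- The constant `c_N` from Aldred–Armitage. -/
noncomputable def cN (N : ℕ) : ℝ :=
  if N = 2 then 1
  else N * (∏ j ∈ Finset.Icc 1 (N - 1),
      ((2 * j : ℝ)) ^ (2 * j) / ((2 * j + 1 : ℝ)) ^ (2 * j + 1)) ^ (1 / (2 * (N : ℝ)))

theorem stmt19 (N : ℕ) (hN : 3 ≤ N) : Real.sqrt ((N : ℝ) / 2) < cN N := by
  have hN0 : 0 < N := by omega
  have hprod : ((2 * N : ℝ) ^ N)⁻¹ < ∏ j ∈ Finset.Icc 1 (N - 1),
      (2 * j : ℝ) ^ (2 * j) / (2 * j + 1 : ℝ) ^ (2 * j + 1) :=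
    calc ((2 * N : ℝ) ^ N)⁻¹ < 2 / (2 * N : ℝ) ^ N := by
          rw [inv_eq_one_div]; gcongr; norm_num
      _ ≤ _ := two_div_pow_le_prod N hN0
  calc √((N : ℝ) / 2) = N * (√(2 * N))⁻¹ := sqrt_div_two_eq_mul_inv_sqrt N
    _ = N * ((2 * N : ℝ) ^ N)⁻¹ ^ (1 / (2 * (N : ℝ))) := by
        rw [Real.inv_rpow (by positivity), pow_rpow_one_div_two_mul_eq_sqrt (by positivity)
          hN0.ne']
    _ < cN N := by
        rw [cN, if_neg (by omega)]
        gcongr
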